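/- Let r: ℝ² → iso(2,1) ⊗ iso(2,1) be given by r_b(ψ,α) = ½(P_a⊗J^a + J^a⊗P_a) + ½ tanh(ψ/2)(P_2∧J_0 - P_0∧J_2) + (α/(4cosh²(ψ/2))) P_2∧P_0, where X∧Y := X⊗Y - Y⊗X. Then r_b is a classical dynamical r-matrix for the Cartan subalgebra h_b = span{J_1, P_1}: it is h_b-invariant and satisfies the classical dynamical Yang-Baxter equation with x_1 = P_1, x_2 = J_1 and dynamical variables (ψ, α). -/

import Mathlib

open Real BigOperators Finset

noncomputable section

/-- Vectors in ℝ³. -/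
abbrev V3 : Type := Fin 3 → ℝ

/-- Minkowski metric η = diag(1,-1,-1). -/
def ηm : Fin 3 → ℝ := ![1, -1, -1]

/-- Totally antisymmetric symbol with ε₀₁₂ = 1. -/
def eps : Fin 3 → Fin 3 → Fin 3 → ℝ := fun a b c =>
  if (a, b, c) = ((0 : Fin 3), (1 : Fin 3), (2 : Fin 3)) ∨ (a, b, c) = (1, 2, 0) ∨ (a, b, c) = (2, 0, 1) then 1
  else if (a, b, c) = ((0 : Fin 3), (2 : Fin 3), (1 : Fin 3)) ∨ (a, b, c) = (2, 1, 0) ∨ (a, b, c) = (1, 0, 2) then -1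
  else 0

/-- An element of iso(2,1) is encoded by its J-coefficients and P-coefficients:
`(j, p)` represents `Σ j^a J_a + Σ p^a P_a`. -/
abbrev iso21 : Type := V3 × V3

def Jvec (x : V3) : iso21 := (x, 0)
def Pvec (x : V3) : iso21 := (0, x)
def Jb (a : Fin 3) : iso21 := Jvec (fun i => if i = a then 1 else 0)
def Pb (a : Fin 3) : iso21 := Pvec (fun i => if i = a then 1 else 0)

/-- The Lie bracket of iso(2,1): [J_a,J_b] = ε_{ab}^c J_c, [J_a,P_b] = ε_{ab}^c P_c,
[P_a,P_b] = 0, with ε_{ab}^c = η^{cc} ε_{abc}. -/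
def br (x y : iso21) : iso21 :=
  (fun c => ∑ a, ∑ b, x.1 a * y.1 b * (ηm c * eps a b c),
   fun c => ∑ a, ∑ b, (x.1 a * y.2 b + x.2 a * y.1 b) * (ηm c * eps a b c))

/-- The Ad-invariant pairing ⟨J_a,P_b⟩ = η_{ab}, ⟨J,J⟩ = ⟨P,P⟩ = 0. -/
def pairing (x y : iso21) : ℝ := ∑ a, ηm a * (x.1 a * y.2 a + x.2 a * y.1 a)

/-- Minkowski inner product on ℝ³. -/
def mdot (x y : V3) : ℝ := ∑ a, ηm a * x a * y a

/-- Lorentzian cross product (x∧y)^a = ε^{abc} x_b y_c. -/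
def crossL (x y : V3) : V3 := fun a => ηm a * ∑ b, ∑ c, eps a b c * x b * y c

/-- Index set of the basis {J_a, P_a}: `false` ↦ J, `true` ↦ P. -/
abbrev Bas : Type := Bool × Fin 3

def basis : Bas → iso21 := fun p => if p.1 then Pb p.2 else Jb p.2
def coeff (x : iso21) (p : Bas) : ℝ := if p.1 then x.2 p.2 else x.1 p.2

/-- 2-tensors and 3-tensors over iso(2,1), given by their coefficients in the basis. -/
abbrev TT2 : Type := Bas → Bas → ℝ
abbrev TT3 : Type := Bas → Bas → Bas → ℝ

def tens (x y : iso21) : TT2 := fun μ ν => coeff x μ * coeff y ν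

/-- Structure constants: coefficient of `[T_a, T_c]` on `T_m`. -/
def Cstr (a c m : Bas) : ℝ := coeff (br (basis a) (basis c)) m

/-- The mixed Yang-Baxter expression [[r,s]] = [r₁₂,s₁₃] + [r₁₂,s₂₃] + [r₁₃,s₂₃]. -/
def YB2 (r s : TT2) : TT3 := fun μ ν lam =>
    (∑ a, ∑ c, r a ν * s c lam * Cstr a c μ)
  + (∑ b, ∑ c, r μ b * s c lam * Cstr b c ν)
  + (∑ b, ∑ d, r μ b * s ν d * Cstr b d lam)

/-- The action of X on a 2-tensor: [X⊗1 + 1⊗X, r]. -/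
def act2 (x : iso21) (r : TT2) : TT2 := fun μ ν =>
  (∑ a, r a ν * coeff (br x (basis a)) μ) + (∑ b, r μ b * coeff (br x (basis b)) ν)

/-- The classical r-matrix r = P_a ⊗ J^a. -/
def rPJ : TT2 := fun μ ν => ∑ a, ηm a * tens (Pb a) (Jb a) μ ν

/-- The symmetric part r_S = ½(P_a⊗J^a + J^a⊗P_a). -/
def rSym : TT2 := fun μ ν => (1/2) * ∑ a, ηm a * (tens (Pb a) (Jb a) μ ν + tens (Jb a) (Pb a) μ ν)

/-- The classical dynamical Yang-Baxter equation at (ψ,α) with dynamical elements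
x₁ (paired with ψ) and x₂ (paired with α). -/
def CDYBEat (r : ℝ → ℝ → TT2) (x1 x2 : ℝ → ℝ → iso21) (ψ α : ℝ) : Prop :=
  ∀ μ ν lam : Bas, YB2 (r ψ α) (r ψ α) μ ν lam =
      coeff (x1 ψ α) μ * deriv (fun s => r s α ν lam) ψ
    - coeff (x1 ψ α) ν * deriv (fun s => r s α μ lam) ψ
    + coeff (x1 ψ α) lam * deriv (fun s => r s α μ ν) ψ
    + coeff (x2 ψ α) μ * deriv (fun s => r ψ s ν lam) α
    - coeff (x2 ψ α) ν * deriv (fun s => r ψ s μ lam) α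
    + coeff (x2 ψ α) lam * deriv (fun s => r ψ s μ ν) α

/-- Adjoint action of a Lorentz matrix g on iso(2,1). -/
def adL (g : Matrix (Fin 3) (Fin 3) ℝ) (x : iso21) : iso21 := (g.mulVec x.1, g.mulVec x.2)

/-- Adjoint action of a translation t on iso(2,1): J_a ↦ J_a + ε_{ab}^c t^b P_c, P_a ↦ P_a. -/
def adT (t : V3) (x : iso21) : iso21 :=
  (x.1, fun c => x.2 c + ∑ a, ∑ b, x.1 a * t b * (ηm c * eps a b c))

/-- The proper orthochronous Lorentz group SO⁺(2,1) as 3×3 matrices. -/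
def SOplus : Set (Matrix (Fin 3) (Fin 3) ℝ) :=
  {g | g.transpose * Matrix.diagonal ηm * g = Matrix.diagonal ηm ∧ g.det = 1 ∧ 0 < g 0 0}

/-- The induced action of a linear map on 2-tensors, A⊗A. -/
def Ad2 (A : iso21 → iso21) (r : TT2) : TT2 :=
  fun μ ν => ∑ a : Bas, ∑ b : Bas, r a b * coeff (A (basis a)) μ * coeff (A (basis b)) ν

/-- r(ψ,α) = P_a⊗J^a - V^{bc}(ψ)(P_b⊗J_c - J_c⊗P_b) + ε^{bcd} m_d(ψ,α) P_b⊗P_c. -/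
def rVm (V : ℝ → Matrix (Fin 3) (Fin 3) ℝ) (m : ℝ → ℝ → V3) (ψ α : ℝ) : TT2 := fun μ ν =>
  rPJ μ ν
  - (∑ b, ∑ c, V ψ b c * (tens (Pb b) (Jb c) μ ν - tens (Jb c) (Pb b) μ ν))
  + ∑ b, ∑ c, ∑ d, ηm b * ηm c * eps b c d * m ψ α d * tens (Pb b) (Pb c) μ ν

/-- The vector w defined by ε^{abc} w_c = V^{ab} - V^{ba}. -/
def wOf (V : ℝ → Matrix (Fin 3) (Fin 3) ℝ) (ψ : ℝ) : V3 := fun c =>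
  (1/2) * ∑ a, ∑ b, ηm a * ηm b * eps a b c * (V ψ a b - V ψ b a)

/-- CDYBE condition (i) at (ψ,α), componentwise in (a,b,c). -/
def Cond1At (V : ℝ → Matrix (Fin 3) (Fin 3) ℝ) (m : ℝ → ℝ → V3) (qψ qα : ℝ → V3)
    (ψ α : ℝ) : Prop :=
  ∀ a b c : Fin 3,
    qα ψ a * (∑ d, ηm b * ηm c * eps b c d * deriv (fun s => m ψ s d) α)
    - qψ ψ b * deriv (fun s => V s c a) ψ
    + qψ ψ c * deriv (fun s => V s b a) ψ
    - (∑ d, ∑ g, V ψ b d * V ψ c g * (ηm a * eps d g a))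
    - (∑ d, ∑ g, V ψ d a * V ψ c g * (ηm b * eps d g b))
    + (∑ d, ∑ g, V ψ d a * V ψ b g * (ηm c * eps d g c))
    - (∑ d, V ψ d a * (ηm b * ηm c * eps b c d)) = 0

/-- CDYBE condition (ii) at (ψ,α): q_ψ·∂_ψ m + q_θ·∂_α m + w·m = 0. -/
def Cond2At (V : ℝ → Matrix (Fin 3) (Fin 3) ℝ) (m : ℝ → ℝ → V3) (qψ : ℝ → V3)
    (qθ : ℝ → ℝ → V3) (ψ α : ℝ) : Prop :=
  mdot (qψ ψ) (fun a => deriv (fun s => m s α a) ψ)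
  + mdot (qθ ψ α) (fun a => deriv (fun s => m ψ s a) α)
  + mdot (wOf V ψ) (m ψ α) = 0

def wedgeT (x y : iso21) : TT2 := fun μ ν => tens x y μ ν - tens y x μ ν

/-- The standard dynamical r-matrix for the Cartan subalgebra span{J₀,P₀}. -/
def ra (ψ α : ℝ) : TT2 := fun μ ν =>
  rSym μ ν + (1/2) * Real.tan (ψ/2) * (wedgeT (Pb 1) (Jb 2) μ ν - wedgeT (Pb 2) (Jb 1) μ ν)
  + α / (4 * (Real.cos (ψ/2))^2) * wedgeT (Pb 1) (Pb 2) μ ν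

/-- The standard dynamical r-matrix for the Cartan subalgebra span{J₁,P₁}. -/
def rb (ψ α : ℝ) : TT2 := fun μ ν =>
  rSym μ ν + (1/2) * Real.tanh (ψ/2) * (wedgeT (Pb 2) (Jb 0) μ ν - wedgeT (Pb 0) (Jb 2) μ ν)
  + α / (4 * (Real.cosh (ψ/2))^2) * wedgeT (Pb 2) (Pb 0) μ ν

/-!
Write `r_b = r_S + t A + u B` with `A = P₂∧J₀ - P₀∧J₂`, `B = P₂∧P₀`, `t = ½ tanh(ψ/2)` and
`u = α / (4 cosh²(ψ/2))`. Since `∂_ψ t = ∂_α u = 1/4 - t²` and `∂_ψ u = -2tu`, both sides of the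
CDYBE are polynomials in `(t, u)`: the equation becomes a quadratic polynomial identity between
3-tensors with constant coefficients, which is checked componentwise. Invariance is linear in the
acting element, so it reduces to `J₁` and `P₁`, which annihilate `r_S` (the Casimir element of the
pairing) as well as `A` and `B`.
-/

namespace Real

theorem one_sub_tanh_sq (x : ℝ) : 1 - tanh x ^ 2 = 1 / cosh x ^ 2 := by
  have hc : cosh x ≠ 0 := (cosh_pos x).ne'
  rw [tanh_eq_sinh_div_cosh]
  field_simp
  linear_combination cosh_sq_sub_sinh_sq x

theorem hasDerivAt_tanh (x : ℝ) : HasDerivAt tanh (1 - tanh x ^ 2) x := by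
  have hc : cosh x ≠ 0 := (cosh_pos x).ne'
  have h := (hasDerivAt_sinh x).div (hasDerivAt_cosh x) hc
  rw [show sinh / cosh = tanh from funext fun y => (tanh_eq_sinh_div_cosh y).symm] at h
  refine h.congr_deriv ?_
  rw [one_sub_tanh_sq]
  field_simp
  linear_combination cosh_sq_sub_sinh_sq x

end Real

lemma hasDerivAt_half_tanh_half (x : ℝ) :
    HasDerivAt (fun s => 1 / 2 * tanh (s / 2)) (1 / 4 - (1 / 2 * tanh (x / 2)) ^ 2) x := by
  have h := ((hasDerivAt_tanh (x / 2)).comp x ((hasDerivAt_id x).div_const 2)).const_mul (1 / 2)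
  exact h.congr_deriv (by ring)

lemma one_div_four_cosh_sq_half (x : ℝ) :
    1 / (4 * cosh (x / 2) ^ 2) = 1 / 4 - (1 / 2 * tanh (x / 2)) ^ 2 := by
  linear_combination (1 / 4 : ℝ) * (one_sub_tanh_sq (x / 2)).symm

lemma hasDerivAt_div_four_cosh_sq_half (α x : ℝ) :
    HasDerivAt (fun s => α / (4 * cosh (s / 2) ^ 2))
      (-(2 * (1 / 2 * tanh (x / 2)) * (α / (4 * cosh (x / 2) ^ 2)))) x := by
  have hform : ∀ s : ℝ, α / (4 * cosh (s / 2) ^ 2) = α * (1 / 4 - (1 / 2 * tanh (s / 2)) ^ 2) := by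
    intro s; rw [← one_div_four_cosh_sq_half]; ring
  simp only [hform]
  exact ((((hasDerivAt_half_tanh_half x).pow 2).const_sub (1 / 4)).const_mul α).congr_deriv
    (by ring)

/-- `x^{(1)} s₂₃ - x^{(2)} s₁₃ + x^{(3)} s₁₂` in the notation of the CDYBE. -/
def cyclicInsert (x : iso21) (s : TT2) : TT3 := fun μ ν lam =>
  coeff x μ * s ν lam - coeff x ν * s μ lam + coeff x lam * s μ ν

lemma cdybeAt_of_hasDerivAt {r : ℝ → ℝ → TT2} {x₁ x₂ : ℝ → ℝ → iso21} {ψ α : ℝ} {Dψ Dα : TT2}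
    (hψ : ∀ μ ν, HasDerivAt (fun s => r s α μ ν) (Dψ μ ν) ψ)
    (hα : ∀ μ ν, HasDerivAt (fun s => r ψ s μ ν) (Dα μ ν) α)
    (h : YB2 (r ψ α) (r ψ α) = cyclicInsert (x₁ ψ α) Dψ + cyclicInsert (x₂ ψ α) Dα) :
    CDYBEat r x₁ x₂ ψ α := by
  intro μ ν lam
  rw [h]
  simp only [(hψ _ _).deriv, (hα _ _).deriv, Pi.add_apply, cyclicInsert]
  ring

lemma coeff_add (x y : iso21) (μ : Bas) : coeff (x + y) μ = coeff x μ + coeff y μ := by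
  unfold coeff; split_ifs <;> rfl

lemma coeff_smul (c : ℝ) (x : iso21) (μ : Bas) : coeff (c • x) μ = c * coeff x μ := by
  unfold coeff; split_ifs <;> rfl

lemma br_add_left (x y z : iso21) : br (x + y) z = br x z + br y z := by
  ext c <;> simp only [br, Prod.fst_add, Prod.snd_add, Pi.add_apply, ← Finset.sum_add_distrib] <;>
    exact Finset.sum_congr rfl fun _ _ => Finset.sum_congr rfl fun _ _ => by ring

lemma br_smul_left (a : ℝ) (x z : iso21) : br (a • x) z = a • br x z := by
  ext c <;> simp only [br, Prod.smul_fst, Prod.smul_snd, Pi.smul_apply, smul_eq_mul, Finset.mul_sum] <;>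
    exact Finset.sum_congr rfl fun _ _ => Finset.sum_congr rfl fun _ _ => by ring

lemma act2_add_left (x y : iso21) (r : TT2) : act2 (x + y) r = act2 x r + act2 y r := by
  funext μ ν
  simp only [act2, br_add_left, coeff_add, Pi.add_apply, mul_add, Finset.sum_add_distrib]
  ring

lemma act2_smul_left (a : ℝ) (x : iso21) (r : TT2) : act2 (a • x) r = a • act2 x r := by
  funext μ ν
  simp only [act2, br_smul_left, coeff_smul, Pi.smul_apply, smul_eq_mul, mul_add, Finset.mul_sum]
  congr 1 <;> exact Finset.sum_congr rfl fun _ _ => by ring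

lemma Cstr_apply (b₁ b₂ b₃ : Bool) (i j k : Fin 3) :
    Cstr (b₁, i) (b₂, j) (b₃, k) =
      if b₁ && b₂ then 0 else if b₃ = (b₁ || b₂) then ηm k * eps i j k else 0 := by
  cases b₁ <;> cases b₂ <;> cases b₃ <;>
    simp [Cstr, br, basis, coeff, Jb, Pb, Jvec, Pvec, Finset.sum_ite_eq', mul_ite]

def rbA : TT2 := fun μ ν => wedgeT (Pb 2) (Jb 0) μ ν - wedgeT (Pb 0) (Jb 2) μ ν

def rbB : TT2 := wedgeT (Pb 2) (Pb 0)

def rbLin (t u : ℝ) : TT2 := fun μ ν => t * rbA μ ν + u * rbB μ ν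

/-- `rb ψ α = rbAff (½ tanh(ψ/2)) (α / (4 cosh²(ψ/2)))` holds by definition. -/
def rbAff (t u : ℝ) : TT2 := fun μ ν => rSym μ ν + t * rbA μ ν + u * rbB μ ν

def wedgeMat20 : Matrix (Fin 3) (Fin 3) ℝ := !![0, 0, -1; 0, 0, 0; 1, 0, 0]

lemma rSym_apply (b₁ b₂ : Bool) (i j : Fin 3) :
    rSym (b₁, i) (b₂, j) = if b₁ ≠ b₂ ∧ i = j then ηm i / 2 else 0 := by
  cases b₁ <;> cases b₂ <;> fin_cases i <;> fin_cases j <;>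
    simp [rSym, tens, coeff, Pb, Jb, Pvec, Jvec, ηm] <;> ring

lemma rbA_apply (b₁ b₂ : Bool) (i j : Fin 3) :
    rbA (b₁, i) (b₂, j) = if b₁ ≠ b₂ then wedgeMat20 i j else 0 := by
  cases b₁ <;> cases b₂ <;> fin_cases i <;> fin_cases j <;>
    simp [wedgeMat20, rbA, wedgeT, tens, coeff, Pb, Jb, Pvec, Jvec]

lemma rbB_apply (b₁ b₂ : Bool) (i j : Fin 3) :
    rbB (b₁, i) (b₂, j) = if b₁ && b₂ then wedgeMat20 i j else 0 := by
  cases b₁ <;> cases b₂ <;> fin_cases i <;> fin_cases j <;>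
    simp [wedgeMat20, rbB, wedgeT, tens, coeff, Pb, Pvec]

lemma hasDerivAt_rbAff {t u : ℝ → ℝ} {t' u' x : ℝ} (ht : HasDerivAt t t' x)
    (hu : HasDerivAt u u' x) (μ ν : Bas) :
    HasDerivAt (fun s => rbAff (t s) (u s) μ ν) (rbLin t' u' μ ν) x :=
  ((ht.mul_const (rbA μ ν)).const_add (rSym μ ν)).add (hu.mul_const (rbB μ ν))

lemma act2_basis_rbAff (c : Bool) (t u : ℝ) : act2 (basis (c, 1)) (rbAff t u) = 0 := by
  funext μ ν
  obtain ⟨b₁, i⟩ := μ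
  obtain ⟨b₂, j⟩ := ν
  change (∑ a, _ * Cstr _ a _) + (∑ a, _ * Cstr _ a _) = 0
  simp only [rbAff, Fintype.sum_prod_type, Fintype.sum_bool, Fin.sum_univ_three,
    rbA_apply, rbB_apply, rSym_apply, Cstr_apply]
  cases c <;> cases b₁ <;> cases b₂ <;> fin_cases i <;> fin_cases j <;>
    simp [wedgeMat20, ηm, eps] <;> ring

lemma act2_rbAff_of_mem_span {x : iso21} (hx : x ∈ Submodule.span ℝ ({Jb 1, Pb 1} : Set iso21))
    (t u : ℝ) : act2 x (rbAff t u) = 0 := by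
  obtain ⟨a, b, rfl⟩ := Submodule.mem_span_pair.mp hx
  rw [act2_add_left, act2_smul_left, act2_smul_left]
  change a • act2 (basis (false, 1)) _ + b • act2 (basis (true, 1)) _ = 0
  simp only [act2_basis_rbAff, smul_zero, add_zero]

set_option maxHeartbeats 1000000 in
lemma yb2_rbAff (t u : ℝ) :
    YB2 (rbAff t u) (rbAff t u) =
      cyclicInsert (Pb 1) (rbLin (1 / 4 - t ^ 2) (-(2 * t * u)))
        + cyclicInsert (Jb 1) (rbLin 0 (1 / 4 - t ^ 2)) := by
  funext μ ν lam
  obtain ⟨b₁, i⟩ := μ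
  obtain ⟨b₂, j⟩ := ν
  obtain ⟨b₃, k⟩ := lam
  simp only [YB2, Pi.add_apply, cyclicInsert, rbAff, rbLin, Fintype.sum_prod_type,
    Fintype.sum_bool, Fin.sum_univ_three, Cstr_apply, rbA_apply, rbB_apply, rSym_apply]
  cases b₁ <;> cases b₂ <;> cases b₃ <;> simp [coeff, Pb, Jb, Pvec, Jvec] <;>
    fin_cases i <;> fin_cases j <;> fin_cases k <;> simp [wedgeMat20, ηm, eps] <;> ring

/-- r_b(ψ,α) = ½(P_a⊗J^a + J^a⊗P_a) + ½tanh(ψ/2)(P₂∧J₀ - P₀∧J₂)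
+ (α/(4cosh²(ψ/2))) P₂∧P₀ is a classical dynamical r-matrix for h_b = span{J₁,P₁}:
it is h_b-invariant and satisfies the CDYBE with x₁ = P₁, x₂ = J₁. -/
theorem stmt9 :
    ∀ ψ α : ℝ,
      (∀ x ∈ Submodule.span ℝ ({Jb 1, Pb 1} : Set iso21), act2 x (rb ψ α) = 0) ∧
      CDYBEat rb (fun _ _ => Pb 1) (fun _ _ => Jb 1) ψ α := by
  intro ψ α
  refine ⟨fun x hx => act2_rbAff_of_mem_span hx _ _, ?_⟩
  have hα : HasDerivAt (fun s => s / (4 * cosh (ψ / 2) ^ 2)) (1 / 4 - (1 / 2 * tanh (ψ / 2)) ^ 2) α :=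
    ((hasDerivAt_id' α).div_const _).congr_deriv (one_div_four_cosh_sq_half ψ)
  exact cdybeAt_of_hasDerivAt
    (hasDerivAt_rbAff (hasDerivAt_half_tanh_half ψ) (hasDerivAt_div_four_cosh_sq_half α ψ))
    (hasDerivAt_rbAff (hasDerivAt_const α _) hα) (yb2_rbAff _ _)
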